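/- arXiv:1501.07104 — 4 statements merged into one kernel-verified Lean document; each statement's English description precedes it below -/
import Mathlib

section
/- Let T = [t_{i,j}] be a matrix in M_n(Z(R)) with entries in the center of R. Then T is transitive if and only if the Hadamard multiplication map Θ_T(A) = T ∗ A (entrywise product) is a ring automorphism of M_n(R). -/
theorem stmt_4 {R : Type*} [Ring R] {n : ℕ} (T : Matrix (Fin n) (Fin n) R)
    (hT : ∀ i j, T i j ∈ Subring.center R) :
    ((∀ i, T i i = 1) ∧ ∀ i j k, T i j * T j k = T i k) ↔
      ∃ e : Matrix (Fin n) (Fin n) R ≃+* Matrix (Fin n) (Fin n) R,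
        ∀ A, e A = Matrix.hadamard T A := by
  constructor
  · rintro ⟨h1, h2⟩
    have hinv : ∀ i j, T j i * T i j = 1 := fun i j => by rw [h2, h1]
    refine ⟨{ toFun := fun A => Matrix.hadamard T A
              invFun := fun A => Matrix.hadamard T.transpose A
              left_inv := ?_
              right_inv := ?_
              map_add' := ?_
              map_mul' := ?_ }, fun A => rfl⟩
    · intro A; ext i j
      simp only [Matrix.hadamard_apply, Matrix.transpose_apply, ← mul_assoc, hinv, one_mul]
    · intro A; ext i j
      simp only [Matrix.hadamard_apply, Matrix.transpose_apply, ← mul_assoc, hinv, one_mul]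
    · intro A B; ext i j
      simp only [Matrix.hadamard_apply, Matrix.mul_apply, Finset.mul_sum]
      refine Finset.sum_congr rfl fun k _ => ?_
      have hc := Subring.mem_center_iff.mp (hT k j)
      calc T i j * (A i k * B k j) = T i k * T k j * (A i k * B k j) := by rw [h2]
        _ = T i k * (T k j * A i k) * B k j := by simp only [mul_assoc]
        _ = T i k * A i k * (T k j * B k j) := by rw [← hc]; simp only [mul_assoc]
    · intro A B; ext i j
      simp [Matrix.hadamard_apply, mul_add]
  · rintro ⟨e, he⟩
    have hmul : ∀ A B, Matrix.hadamard T (A * B) =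
        Matrix.hadamard T A * Matrix.hadamard T B := by
      intro A B; rw [← he, ← he, ← he, map_mul]
    constructor
    · intro i
      have h1 : Matrix.hadamard T (1 : Matrix (Fin n) (Fin n) R) = 1 := by
        rw [← he, map_one]
      have := congrFun (congrFun h1 i) i
      simpa using this
    · intro i j k
      have := hmul (Matrix.single i j 1) (Matrix.single j k 1)
      rw [Matrix.single_mul_single_same] at this
      have h := congrFun (congrFun this i) k
      simp [Matrix.hadamard_apply, Matrix.mul_apply, Matrix.single_apply_same,
        Matrix.single, Finset.sum_ite_eq, Finset.sum_ite_eq'] at h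
      -- h should give T i k = T i j * T j k
      simpa using h.symm
end

section
/- If T = [t_{i,j}] is a transitive matrix in M_n(Z(R)), then the Hadamard multiplication T ∗ A equals the conjugation D A D^{-1} for all A ∈ M_n(R), where D is the diagonal matrix with diagonal entries t_{1,1}, t_{2,1}, ..., t_{n,1} (the first column of T). -/
theorem stmt_5 {R : Type*} [Ring R] {n : ℕ} [NeZero n] (T : Matrix (Fin n) (Fin n) R)
    (hT : ∀ i j, T i j ∈ Subring.center R)
    (hdiag : ∀ i, T i i = 1) (htrans : ∀ i j k, T i j * T j k = T i k) :
    (Matrix.diagonal fun i => T i 0) * (Matrix.diagonal fun i => T 0 i) = 1 ∧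
    (Matrix.diagonal fun i => T 0 i) * (Matrix.diagonal fun i => T i 0) = 1 ∧
    ∀ A : Matrix (Fin n) (Fin n) R,
      Matrix.hadamard T A =
        (Matrix.diagonal fun i => T i 0) * A * (Matrix.diagonal fun i => T 0 i) := by
  refine ⟨?_, ?_, ?_⟩
  · rw [Matrix.diagonal_mul_diagonal]
    convert Matrix.diagonal_one with i
    rw [htrans, hdiag]
  · rw [Matrix.diagonal_mul_diagonal]
    convert Matrix.diagonal_one with i
    rw [htrans, hdiag]
  · intro A
    ext i j
    rw [Matrix.mul_apply, Matrix.hadamard_apply]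
    rw [Finset.sum_eq_single j]
    · rw [Matrix.diagonal_mul, Matrix.diagonal_apply_eq, ← htrans i 0 j, mul_assoc,
        mul_assoc, Subring.mem_center_iff.mp (hT 0 j) (A i j)]
    · intro b _ hb
      simp [Matrix.diagonal_apply_ne _ hb]
    · simp
end

section
/- Let δ: R → R be an automorphism with δ^n = id_R, and R[w,δ] the skew polynomial ring with relation w r = δ(r) w. The map δ^⊗ sending r_0 + r_1 w + ... + r_k w^k to δ-bar(r_0) + δ-bar(r_1) H z + ... + δ-bar(r_k) H^k z^k is an injective ring homomorphism from R[w,δ] into M_n(R[z]), where z is a central commuting indeterminate, H is the cyclic permutation matrix, and δ-bar(r) = diag(r, δ(r), ..., δ^{n-1}(r)). -/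
def cyclicH (n : ℕ) (R : Type*) [Ring R] [NeZero n] : Matrix (Fin n) (Fin n) R :=
  fun i j => if j = i + 1 then 1 else 0

/-!
A ring homomorphism out of `R[w, δ]` is determined by an image `f` of `R` and an image `m` of `w`
with `m * f r = f (δ r) * m`: additivity is free on the basis of monomials, and multiplicativity
only has to be checked on products of two monomials. For `f = δ̄` and `m = Hz` the relation holds
because multiplying a diagonal matrix by the cyclic shift `H` rotates its diagonal by one place,
and the rotated diagonal `(δ r, …, δⁿ⁻¹ r, r)` is `δ̄ (δ r)` exactly because `δⁿ = id`.
The map is injective since the `z ^ k`-coefficient of the `(0, k mod n)` entry of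
`∑ δ̄ (rₖ) Hᵏ zᵏ` is `rₖ`.
-/

open Polynomial Fin.NatCast

section SkewPolynomial

variable {R S T : Type*} [Ring R] [Ring S] [Ring T]

noncomputable def skewEval (f : R →+* T) (m : T) : (ℕ →₀ R) →+ T :=
  Finsupp.liftAddHom fun k => (AddMonoidHom.mulRight (m ^ k)).comp f.toAddMonoidHom

theorem skewEval_apply (f : R →+* T) (m : T) (c : ℕ →₀ R) :
    skewEval f m c = c.sum fun k r => f r * m ^ k :=
  Finsupp.liftAddHom_apply _ c

@[simp]
theorem skewEval_single (f : R →+* T) (m : T) (k : ℕ) (r : R) :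
    skewEval f m (Finsupp.single k r) = f r * m ^ k :=
  Finsupp.liftAddHom_apply_single _ k r

variable {σ : R →+* R} {f : R →+* T} {m : T}

theorem pow_mul_eq_of_mul_eq (hm : ∀ r, m * f r = f (σ r) * m) (k : ℕ) (r : R) :
    m ^ k * f r = f ((σ ^ k) r) * m ^ k := by
  induction k generalizing r with
  | zero => simp
  | succ k ih =>
    rw [pow_succ m, mul_assoc, hm, ← mul_assoc, ih, mul_assoc, ← pow_succ, pow_succ σ,
      RingHom.mul_def, RingHom.comp_apply]

theorem skewEval_single_mul_single (hm : ∀ r, m * f r = f (σ r) * m) (k l : ℕ) (a b : R) :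
    skewEval f m (Finsupp.single k a) * skewEval f m (Finsupp.single l b) =
      skewEval f m (Finsupp.single (k + l) (a * (σ ^ k) b)) := by
  rw [skewEval_single, skewEval_single, skewEval_single, mul_assoc, ← mul_assoc (m ^ k),
    pow_mul_eq_of_mul_eq hm, map_mul, mul_assoc, mul_assoc, pow_add]

/-- The universal property of the skew polynomial ring `R[w, σ]`, presented by the
bijectivity of `∑ rₖ ↦ ∑ ι(rₖ) wᵏ`. -/
theorem exists_ringHom_comp_skewEval (ι : R →+* S) {w : S} (hw : ∀ r, w * ι r = ι (σ r) * w)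
    (hbij : Function.Bijective (skewEval ι w)) (hm : ∀ r, m * f r = f (σ r) * m) :
    ∃ Φ : S →+* T, ∀ c, Φ (skewEval ι w c) = skewEval f m c := by
  let e := AddEquiv.ofBijective (skewEval ι w) hbij
  let φ : S →+ T := (skewEval f m).comp e.symm.toAddMonoidHom
  have hφ (c : ℕ →₀ R) : φ (skewEval ι w c) = skewEval f m c := by
    simp only [φ, AddMonoidHom.comp_apply, AddEquiv.coe_toAddMonoidHom]
    rw [← AddEquiv.ofBijective_apply _ hbij, AddEquiv.symm_apply_apply]
  have hmul (c d : ℕ →₀ R) : φ (skewEval ι w c * skewEval ι w d) =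
      φ (skewEval ι w c) * φ (skewEval ι w d) := by
    induction c using Finsupp.induction_linear with
    | zero => simp
    | add c₁ c₂ h₁ h₂ => simp only [map_add, add_mul, h₁, h₂]
    | single k a =>
      induction d using Finsupp.induction_linear with
      | zero => simp
      | add d₁ d₂ h₁ h₂ => simp only [map_add, mul_add, h₁, h₂]
      | single l b =>
        rw [skewEval_single_mul_single hw, hφ, hφ, hφ, skewEval_single_mul_single hm]
  refine ⟨{ φ with map_one' := ?_, map_mul' := ?_ }, hφ⟩
  · simpa using hφ (Finsupp.single 0 1)
  · intro s t
    obtain ⟨c, rfl⟩ := hbij.2 s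
    obtain ⟨d, rfl⟩ := hbij.2 t
    exact hmul c d

end SkewPolynomial

section CyclicMatrix

variable {R : Type*} [Ring R] {n : ℕ}

noncomputable def deltaBar (n : ℕ) (δ : R →+* R) : R →+* Matrix (Fin n) (Fin n) R[X] :=
  (Matrix.diagonalRingHom (Fin n) R[X]).comp (RingHom.pi fun k : Fin n => C.comp (δ ^ (k : ℕ)))

theorem deltaBar_apply (δ : R →+* R) (r : R) :
    deltaBar n δ r = Matrix.diagonal fun k : Fin n => C ((⇑δ)^[(k : ℕ)] r) :=
  rfl

variable [NeZero n]

noncomputable def cyclicHX (n : ℕ) (R : Type*) [Ring R] [NeZero n] :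
    Matrix (Fin n) (Fin n) R[X] :=
  (X : R[X]) • (cyclicH n R).map C

theorem cyclicHX_apply (i j : Fin n) :
    cyclicHX n R i j = if j = i + 1 then X else 0 := by
  by_cases h : j = i + 1 <;> simp [cyclicHX, cyclicH, h]

theorem cyclicHX_pow_apply (k : ℕ) (i j : Fin n) :
    (cyclicHX n R ^ k) i j = if j = i + (k : Fin n) then X ^ k else 0 := by
  induction k generalizing i j with
  | zero => simp [Matrix.one_apply, eq_comm]
  | succ k ih =>
    rw [pow_succ, Matrix.mul_apply, Finset.sum_eq_single (i + (k : Fin n))]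
    · simp [ih, cyclicHX_apply, pow_succ, add_assoc]
    · intro b _ hb
      simp [ih, hb]
    · simp

theorem cyclicHX_mul_deltaBar {δ : R →+* R} (hδ : (⇑δ)^[n] = id) (r : R) :
    cyclicHX n R * deltaBar n δ r = deltaBar n δ (δ r) * cyclicHX n R := by
  ext1 i j
  rw [deltaBar_apply, deltaBar_apply, Matrix.mul_diagonal, Matrix.diagonal_mul, cyclicHX_apply]
  split_ifs with h
  · subst h
    have hper : Function.IsPeriodicPt δ n r := congrFun hδ r
    rw [X_mul_C, ← Function.iterate_succ_apply, ← hper.iterate_mod_apply (i : ℕ).succ]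
    simp [Fin.val_add]
  · simp

theorem skewEval_deltaBar_coeff (δ : R →+* R) (c : ℕ →₀ R) (k : ℕ) :
    (skewEval (deltaBar n δ) (cyclicHX n R) c 0 k).coeff k = c k := by
  classical
  rw [skewEval_apply, Finsupp.sum, Matrix.sum_apply, finsetSum_coeff,
    Finset.sum_eq_single k]
  · simp [deltaBar_apply, Matrix.diagonal_mul, cyclicHX_pow_apply, coeff_C_mul, coeff_X_pow]
  · intro l _ hl
    simp only [deltaBar_apply, Matrix.diagonal_mul, cyclicHX_pow_apply]
    split_ifs <;> simp [hl.symm]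
  · intro hk
    simp [Finsupp.notMem_support_iff.mp hk]

theorem skewEval_deltaBar_injective (δ : R →+* R) :
    Function.Injective (skewEval (deltaBar n δ) (cyclicHX n R)) := fun c d h =>
  Finsupp.ext fun k => by rw [← skewEval_deltaBar_coeff (n := n) δ c, h, skewEval_deltaBar_coeff]

end CyclicMatrix

theorem stmt_10_general {R S : Type*} [Ring R] [Ring S] {n : ℕ} [NeZero n]
    (δ : R ≃+* R) (hδ : (⇑δ)^[n] = id)
    (ι : R →+* S) (w : S)
    (hw : ∀ r : R, w * ι r = ι (δ r) * w)
    (hspan : ∀ s : S, ∃ c : ℕ →₀ R, s = c.sum fun k r => ι r * w ^ k)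
    (huniq : ∀ c c' : ℕ →₀ R,
      (c.sum fun k r => ι r * w ^ k) = (c'.sum fun k r => ι r * w ^ k) → c = c') :
    ∃ Φ : S →+* Matrix (Fin n) (Fin n) (Polynomial R),
      Function.Injective Φ ∧
      (∀ r : R, Φ (ι r) =
        Matrix.diagonal fun k : Fin n => Polynomial.C ((⇑δ)^[(k : ℕ)] r)) ∧
      Φ w = (Polynomial.X : Polynomial R) • (cyclicH n R).map Polynomial.C := by
  have hbij : Function.Bijective (skewEval ι w) :=
    ⟨fun c c' h => huniq c c' (by simpa only [skewEval_apply] using h),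
      fun s => (hspan s).imp fun c hc => by rw [skewEval_apply, hc]⟩
  obtain ⟨Φ, hΦ⟩ := exists_ringHom_comp_skewEval (σ := (δ : R →+* R)) ι hw hbij
    (cyclicHX_mul_deltaBar (n := n) hδ)
  refine ⟨Φ, ?_, fun r => ?_, ?_⟩
  · refine Function.Injective.of_comp_right ?_ hbij.2
    simpa only [Function.comp_def, hΦ] using skewEval_deltaBar_injective _
  · simpa [deltaBar_apply] using hΦ (Finsupp.single 0 r)
  · simpa [cyclicHX] using hΦ (Finsupp.single 1 1)

/-- If `δⁿ = id` and `S` is the skew polynomial ring `R[w,δ]` (presented abstractly: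
`ι : R →+* S` injective, `w r = δ(r) w`, and every element is uniquely a left polynomial
`Σ ι(rₖ) wᵏ`), then `δ^⊗ : r₀ + r₁w + ⋯ ↦ δ̄(r₀) + δ̄(r₁)Hz + ⋯` is an injective ring
homomorphism `R[w,δ] → Mₙ(R[z])`. -/
theorem stmt_10 {R S : Type*} [Ring R] [Ring S] {n : ℕ} [NeZero n]
    (δ : R ≃+* R) (hδ : (⇑δ)^[n] = id)
    (ι : R →+* S) (w : S)
    (hw : ∀ r : R, w * ι r = ι (δ r) * w)
    (hinj : Function.Injective ι)
    (hspan : ∀ s : S, ∃ c : ℕ →₀ R, s = c.sum fun k r => ι r * w ^ k)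
    (huniq : ∀ c c' : ℕ →₀ R,
      (c.sum fun k r => ι r * w ^ k) = (c'.sum fun k r => ι r * w ^ k) → c = c') :
    ∃ Φ : S →+* Matrix (Fin n) (Fin n) (Polynomial R),
      Function.Injective Φ ∧
      (∀ r : R, Φ (ι r) =
        Matrix.diagonal fun k : Fin n => Polynomial.C ((⇑δ)^[(k : ℕ)] r)) ∧
      Φ w = (Polynomial.X : Polynomial R) • (cyclicH n R).map Polynomial.C :=
  stmt_10_general δ hδ ι w hw hspan huniq
end

section
/- If R = R_0 ⊕ R_1 ⊕ ... ⊕ R_{n-1} is a Z_n-graded ring and A ∈ M_n(R) is a graded matrix (a_{i,j} ∈ R_{j⊟i} for all i,j), then its preadjoint A* is also a graded matrix. -/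
lemma key_sum {n : ℕ} (r s : Fin n) (α β : Equiv.Perm (Fin n)) (hα : α s = s) (hβ : β s = r) :
    (((List.finRange n).filter (fun i => i ≠ s)).map
      (fun i => ((β i : ℕ) : ZMod n) - ((α i : ℕ) : ZMod n))).sum
      = ((s : ℕ) : ZMod n) - ((r : ℕ) : ZMod n) := by
  have hnd : ((List.finRange n).filter (fun i => i ≠ s)).Nodup :=
    (List.nodup_finRange n).filter _
  have : (((List.finRange n).filter (fun i => i ≠ s)).map
      (fun i => ((β i : ℕ) : ZMod n) - ((α i : ℕ) : ZMod n))).sum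
      = ∑ i ∈ Finset.univ.erase s, (((β i : ℕ) : ZMod n) - ((α i : ℕ) : ZMod n)) := by
    rw [← List.sum_toFinset _ hnd]
    congr 1
    ext x
    simp [List.mem_filter, Finset.mem_erase, and_comm]
  rw [this, Finset.sum_sub_distrib]
  have h1 : ∑ i ∈ Finset.univ.erase s, ((β i : ℕ) : ZMod n)
      = (∑ i : Fin n, ((i : ℕ) : ZMod n)) - ((r : ℕ) : ZMod n) := by
    rw [eq_sub_iff_add_eq, ← hβ, Finset.sum_erase_add _ _ (Finset.mem_univ s)]
    exact Equiv.sum_comp β (fun i : Fin n => ((i : ℕ) : ZMod n))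
  have h2 : ∑ i ∈ Finset.univ.erase s, ((α i : ℕ) : ZMod n)
      = (∑ i : Fin n, ((i : ℕ) : ZMod n)) - ((s : ℕ) : ZMod n) := by
    rw [eq_sub_iff_add_eq]
    nth_rewrite 2 [← hα]
    rw [Finset.sum_erase_add _ _ (Finset.mem_univ s)]
    exact Equiv.sum_comp α (fun i : Fin n => ((i : ℕ) : ZMod n))
  rw [h1, h2]
  ring

/-- The preadjoint `A*`: its `(r,s)` entry is
`Σ sgn(α)sgn(β) a_{α(1),β(1)} ⋯ (omitting index s) ⋯ a_{α(n),β(n)}`,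
summed over all `α, β ∈ Sym(n)` with `α(s) = s` and `β(s) = r`,
the product taken in increasing order of the index. -/
def preadjoint {R : Type*} [Ring R] {n : ℕ} (A : Matrix (Fin n) (Fin n) R) :
    Matrix (Fin n) (Fin n) R :=
  fun r s =>
    ∑ α ∈ Finset.univ.filter (fun α : Equiv.Perm (Fin n) => α s = s),
      ∑ β ∈ Finset.univ.filter (fun β : Equiv.Perm (Fin n) => β s = r),
        ((Equiv.Perm.sign α * Equiv.Perm.sign β : ℤˣ) : ℤ) •
          (((List.finRange n).filter (fun i => i ≠ s)).map (fun i => A (α i) (β i))).prod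

theorem stmt_17 {R : Type*} [Ring R] {n : ℕ} [NeZero n]
    (𝒜 : ZMod n → AddSubgroup R) [GradedRing 𝒜]
    (A : Matrix (Fin n) (Fin n) R)
    (hA : ∀ i j : Fin n, A i j ∈ 𝒜 (((j : ℕ) : ZMod n) - ((i : ℕ) : ZMod n))) :
    ∀ r s : Fin n, preadjoint A r s ∈ 𝒜 (((s : ℕ) : ZMod n) - ((r : ℕ) : ZMod n)) := by
  intro r s
  unfold preadjoint
  apply sum_mem
  intro α hα
  apply sum_mem
  intro β hβ
  rw [Finset.mem_filter] at hα hβ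
  apply zsmul_mem
  have := SetLike.list_prod_map_mem_graded (A := 𝒜)
    ((List.finRange n).filter (fun i => i ≠ s))
    (fun i => ((β i : ℕ) : ZMod n) - ((α i : ℕ) : ZMod n))
    (fun i => A (α i) (β i)) (fun j _ => hA (α j) (β j))
  rwa [key_sum r s α β hα.2 hβ.2] at this
end
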